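/- When s = d, strict rectangle search searches exactly the same region as monobead: suppose monobead with beam width s generates its first solution when expanding a node x at slot s of depth d, that no other solutions exist, that strict rectangle search never runs out of nodes to fill its beam, and that tie-breaking is identical. If s = d, then strict rectangle search expands exactly the same set of nodes as monobead with beam width s up to the expansion of x, and in particular the numbers of nodes expanded by the two algorithms are equal (the overhead is 0). -/

import Mathlib

/-!
Formalization of monobead (fixed-width monotonic beam search) and strict
rectangle search (Lemons, Ruml et al., "Rectangle Search: An Anytime Beam
Search").

Monobead with beam width `b`: the beam at each depth is an ordered sequence
of `b` numbered slots.  Given the beam at depth `j`, the beam at depth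
`j+1` is filled in slot order: for `i = 1,…,b`, the node in slot `i` at
depth `j` is expanded, its children are inserted into a priority queue
(ordered by the node-evaluation function `eval`) shared by depth `j+1`, and
the best node of that queue is removed and placed in slot `i` at depth
`j+1`; children not selected remain in the queue for later slots.
`mbBeam P eval b j` is the beam at depth `j` (depth 0 = the start node) and
`mbLog P eval b j` is the list of nodes monobead expands, in expansion
order, through depth `j`.

Strict rectangle search (aspect 1): per depth level it keeps the ordered
list `sel` of slot nodes selected so far, the count `expCnt` of those
already expanded, and the residual priority queue `queue`.  In iteration
`t` it expands one new node (the next slot) at each previously explored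
depth level `1,…,t−1` (shallowest first), and then fills an entire new
depth level: the `t` nodes of depth level `t` are expanded one at a time in
increasing slot order, and immediately after each such expansion the node
for the corresponding slot at depth `t+1` is selected from depth `t+1`'s
queue.  `log` records the expansion order and `starved` is set if a
selection is ever attempted on an empty queue (i.e. the search runs out of
nodes to fill its beam).  Since the assumption throughout is that no
incumbent solution has been found, no pruning occurs and none is modeled;
both algorithms use the same deterministic queue insertion, so tie-breaking
is identical.
-/

namespace RectangleSearchFormal

structure SearchProblem (V : Type) where
  start : V
  isGoal : V → Bool
  succ : V → Finset V
  cost : V → V → ℚ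

variable {V : Type}

def IsPath (P : SearchProblem V) : List V → Prop
  | [] => False
  | [_] => True
  | u :: v :: rest => v ∈ P.succ u ∧ IsPath P (v :: rest)

def pathCost (P : SearchProblem V) : List V → ℚ
  | [] => 0
  | [_] => 0
  | u :: v :: rest => P.cost u v + pathCost P (v :: rest)

def IsPathFromTo (P : SearchProblem V) (p : List V) (u w : V) : Prop :=
  IsPath P p ∧ p.head? = some u ∧ p.getLast? = some w

def IsSolutionPath (P : SearchProblem V) (p : List V) : Prop :=
  ∃ w, IsPathFromTo P p P.start w ∧ P.isGoal w = true

/-- A search node: a state, its g-value, and the path from the start. -/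
structure MNode (V : Type) where
  state : V
  g : ℚ
  path : List V
deriving DecidableEq

/-- The children generated when a node is expanded. -/
noncomputable def children (P : SearchProblem V) (n : MNode V) : List (MNode V) :=
  (P.succ n.state).toList.map fun c => ⟨c, n.g + P.cost n.state c, n.path ++ [c]⟩

/-- Insertion into a priority queue ordered by the node-evaluation function. -/
def insertQ (eval : V → ℚ) (n : MNode V) : List (MNode V) → List (MNode V)
  | [] => [n]
  | m :: rest =>
    if eval n.state ≤ eval m.state then n :: m :: rest else m :: insertQ eval n rest

def insertAll (eval : V → ℚ) (ns : List (MNode V)) (q : List (MNode V)) :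
    List (MNode V) :=
  ns.foldl (fun q' n => insertQ eval n q') q

/-- Fill `b` slots of the next beam in slot order: expand the parent in the
corresponding slot (if any), insert its children into the shared queue, and
pop the best node of the queue into the slot. -/
noncomputable def fillSlots (P : SearchProblem V) (eval : V → ℚ) :
    ℕ → List (MNode V) → List (MNode V) → List (MNode V)
  | 0, _, _ => []
  | b + 1, parents, queue =>
    let q1 := match parents with
      | [] => queue
      | p :: _ => insertAll eval (children P p) queue
    match q1 with
    | [] => []   -- monobead has run out of nodes to fill its beam
    | best :: rest => best :: fillSlots P eval b parents.tail rest

/-- The beam of monobead with width `b` at depth `j` (depth 0 is the start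
node); slot `i` is entry `i - 1`. -/
noncomputable def mbBeam (P : SearchProblem V) (eval : V → ℚ) (b : ℕ) :
    ℕ → List (MNode V)
  | 0 => [⟨P.start, 0, [P.start]⟩]
  | j + 1 => fillSlots P eval b (mbBeam P eval b j) []

/-- The nodes monobead expands, in expansion order, through depth `j`
(slot `i` of depth `j'` is expanded while slot `i` of depth `j' + 1` is
being filled). -/
noncomputable def mbLog (P : SearchProblem V) (eval : V → ℚ) (b : ℕ) :
    ℕ → List (MNode V)
  | 0 => mbBeam P eval b 0
  | j + 1 => mbLog P eval b j ++ mbBeam P eval b (j + 1)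

/-- The state of strict rectangle search. -/
structure SRState (V : Type) where
  sel : ℕ → List (MNode V)
  expCnt : ℕ → ℕ
  queue : ℕ → List (MNode V)
  log : List (MNode V)
  iter : ℕ
  starved : Bool

/-- Expand the next slot node at depth level `ℓ`: if a selected-but-not-yet-
expanded slot node exists it is expanded, otherwise the best node of the
level-`ℓ` queue is selected into the next slot and expanded; its children
are inserted into the queue of level `ℓ + 1`. -/
noncomputable def srExpandNext (P : SearchProblem V) (eval : V → ℚ) (ℓ : ℕ)
    (σ : SRState V) : SRState V :=
  let go : MNode V → SRState V → SRState V := fun n σ' =>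
    { σ' with
      expCnt := fun m => if m = ℓ then σ'.expCnt m + 1 else σ'.expCnt m,
      queue := fun m =>
        if m = ℓ + 1 then insertAll eval (children P n) (σ'.queue m) else σ'.queue m,
      log := σ'.log ++ [n] }
  match (σ.sel ℓ).drop (σ.expCnt ℓ) with
  | n :: _ => go n σ
  | [] =>
    match σ.queue ℓ with
    | [] => { σ with starved := true }
    | n :: q' =>
      go n { σ with sel := fun m => if m = ℓ then σ.sel m ++ [n] else σ.sel m,
                    queue := fun m => if m = ℓ then q' else σ.queue m }

/-- Select (but do not yet expand) the best node of the level-`ℓ` queue for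
the next slot at depth level `ℓ`. -/
def srSelect (ℓ : ℕ) (σ : SRState V) : SRState V :=
  match σ.queue ℓ with
  | [] => { σ with starved := true }
  | n :: q' =>
    { σ with sel := fun m => if m = ℓ then σ.sel m ++ [n] else σ.sel m,
             queue := fun m => if m = ℓ then q' else σ.queue m }

/-- One iteration of strict rectangle search (iteration number `iter + 1`):
one new slot is expanded at each previously explored depth level, then the
new deepest depth level is expanded slot by slot, the corresponding slot of
the next depth level being selected immediately after each expansion. -/
noncomputable def srIter (P : SearchProblem V) (eval : V → ℚ)
    (σ : SRState V) : SRState V :=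
  let t := σ.iter + 1
  let σ1 := (List.range (t - 1)).foldl (fun σ' i => srExpandNext P eval (i + 1) σ') σ
  let σ2 := (List.range t).foldl
      (fun σ' _ => srSelect (t + 1) (srExpandNext P eval t σ')) σ1
  { σ2 with iter := t }

/-- The initial state of strict rectangle search: the start node (depth
level 0) has been expanded, its children populating the depth-1 queue. -/
noncomputable def srInit (P : SearchProblem V) (eval : V → ℚ) : SRState V :=
  srExpandNext P eval 0
    { sel := fun m => if m = 0 then [⟨P.start, 0, [P.start]⟩] else [],
      expCnt := fun _ => 0, queue := fun _ => [],
      log := [], iter := 0, starved := false }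

/-- The state of strict rectangle search after `k` iterations. -/
noncomputable def srRun (P : SearchProblem V) (eval : V → ℚ) (k : ℕ) : SRState V :=
  (srIter P eval)^[k] (srInit P eval)

/-- The number of nodes expanded up to and including the expansion of `x`,
given the expansion log `l`. -/
def countUpTo [DecidableEq V] (l : List (MNode V)) (x : MNode V) : ℕ :=
  (l.takeWhile (fun n => n != x)).length + 1

/-- The overhead of strict rectangle search over monobead (with beam width
`s`, whose first solution is generated when expanding node `x` in slot `s`
at depth `d`): the number of nodes strict rectangle search expands up to
its expansion of `x` minus the number monobead expands up to its expansion
of `x`. -/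
noncomputable def overhead [DecidableEq V] (P : SearchProblem V) (eval : V → ℚ)
    (s d : ℕ) (x : MNode V) : ℤ :=
  (countUpTo (srRun P eval (max s d)).log x : ℤ) -
    (countUpTo (mbLog P eval s d) x : ℤ)



/-!
Strict rectangle search fills depth level `ℓ` by the same sequence of queue operations as
monobead: the children of slot `i` of depth `ℓ - 1` enter the level-`ℓ` queue before slot `i` of
depth `ℓ` is taken from it, and slot `i` is taken before the children of slot `i + 1` arrive.
So at every moment each level's queue is one of monobead's intermediate queues and the nodes it
has selected are a prefix of monobead's beam. After `s` iterations slots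
`1, …, s` of every depth `1, …, s` have been expanded, the last of them being `x`; as multisets
the two logs coincide. The nodes of monobead's log have pairwise different paths, so `x` occurs
once in each log, at the end, and the prefixes before `x` have the same elements.
-/

theorem insertQ_perm (eval : V → ℚ) (n : MNode V) (q : List (MNode V)) :
    (insertQ eval n q).Perm (n :: q) := by
  induction q with
  | nil => rfl
  | cons m rest ih =>
    unfold insertQ
    split_ifs
    · rfl
    · exact (ih.cons m).trans (List.Perm.swap n m rest)

theorem insertAll_perm (eval : V → ℚ) (ns q : List (MNode V)) :
    (insertAll eval ns q).Perm (ns ++ q) := by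
  induction ns generalizing q with
  | nil => rfl
  | cons n ns ih =>
    exact (ih _).trans (((insertQ_perm eval n q).append_left ns).trans List.perm_middle)

theorem coe_take_add_one {α : Type*} {l : List α} {i : ℕ} {a : α} (h : l[i]? = some a) :
    ((l.take (i + 1) : List α) : Multiset α) = (l.take i : Multiset α) + {a} := by
  rw [List.take_add_one, h, ← Multiset.coe_add]
  rfl

theorem sum_coe_take_update {α : Type*} (S : Finset ℕ) (L : ℕ → List α) (e : ℕ → ℕ) {ℓ : ℕ}
    {a : α} (hℓ : ℓ ∈ S) (ha : (L ℓ)[e ℓ]? = some a) :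
    ∑ i ∈ S, (((L i).take (if i = ℓ then e i + 1 else e i) : List α) : Multiset α) =
      ∑ i ∈ S, ((L i).take (e i) : Multiset α) + {a} := by
  calc _ = ∑ i ∈ S, (((L i).take (e i) : Multiset α) + if i = ℓ then {a} else 0) := by
        refine Finset.sum_congr rfl fun i _ => ?_
        split_ifs with hi
        · subst hi
          exact coe_take_add_one ha
        · simp
    _ = _ := by rw [Finset.sum_add_distrib, Finset.sum_ite_eq', if_pos hℓ]

theorem takeWhile_bne_append_of_getLast? {α : Type*} [DecidableEq α] {l : List α} {x : α}
    (hl : l.Nodup) (hx : l.getLast? = some x) : l.takeWhile (· != x) ++ [x] = l := by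
  have hsplit := List.dropLast_append_getLast? x hx
  rw [← hsplit, List.nodup_append] at hl
  have hne : ∀ a ∈ l.dropLast, (a != x) = true := fun a ha =>
    bne_iff_ne.mpr (hl.2.2 a ha x (List.mem_singleton_self x))
  conv_lhs => rw [← hsplit]
  simp only [List.takeWhile_append_of_pos hne, List.append_assoc]
  simpa using hsplit

theorem foldl_range_induction {α : Type*} (f : α → ℕ → α) (Q : ℕ → α → Prop) {a : α} {n : ℕ}
    (h0 : Q 0 a) (hstep : ∀ j < n, ∀ b, Q j b → Q (j + 1) (f b j)) :
    Q n ((List.range n).foldl f a) := by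
  induction n with
  | zero => exact h0
  | succ n ih =>
    rw [List.range_succ, List.foldl_append, List.foldl_cons, List.foldl_nil]
    exact hstep n n.lt_succ_self _ (ih fun j hj => hstep j (by omega))

section FillSlots

variable (P : SearchProblem V) (eval : V → ℚ)

noncomputable def enqueueNext : List (MNode V) → List (MNode V) → List (MNode V)
  | [], q => q
  | p :: _, q => insertAll eval (children P p) q

/-- The queue left over by `fillSlots P eval k ps q`. -/
noncomputable def fillQueue : ℕ → List (MNode V) → List (MNode V) → List (MNode V)
  | 0, _, q => q
  | k + 1, ps, q =>
    match enqueueNext P eval ps q with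
    | [] => []
    | _ :: rest => fillQueue k ps.tail rest

theorem fillSlots_succ (k : ℕ) (ps q : List (MNode V)) :
    fillSlots P eval (k + 1) ps q =
      match enqueueNext P eval ps q with
      | [] => []
      | best :: rest => best :: fillSlots P eval k ps.tail rest := by
  cases ps <;> rfl

theorem fillSlots_eq_take {k m : ℕ} (hkm : k ≤ m) (ps q : List (MNode V)) :
    fillSlots P eval k ps q = (fillSlots P eval m ps q).take k := by
  induction k generalizing m ps q with
  | zero => rfl
  | succ k ih =>
    obtain ⟨m, rfl⟩ : ∃ m', m = m' + 1 := ⟨m - 1, by omega⟩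
    rw [fillSlots_succ, fillSlots_succ]
    cases enqueueNext P eval ps q with
    | nil => rfl
    | cons best rest => simp [ih (by omega : k ≤ m)]

/-- The length hypothesis says that no earlier slot found the queue empty. -/
theorem fillSlots_succ_of_length {k : ℕ} {ps q : List (MNode V)}
    (hk : (fillSlots P eval k ps q).length = k) :
    fillSlots P eval (k + 1) ps q = fillSlots P eval k ps q ++
        (enqueueNext P eval (ps.drop k) (fillQueue P eval k ps q)).take 1 ∧
      fillQueue P eval (k + 1) ps q =
        (enqueueNext P eval (ps.drop k) (fillQueue P eval k ps q)).drop 1 := by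
  induction k generalizing ps q with
  | zero =>
    simp only [fillSlots_succ, fillQueue, List.drop_zero]
    cases enqueueNext P eval ps q <;> simp [fillSlots]
  | succ k ih =>
    rw [fillSlots_succ] at hk
    rw [fillSlots_succ, fillSlots_succ, fillQueue, fillQueue]
    cases h : enqueueNext P eval ps q with
    | nil => simp [h] at hk
    | cons best rest =>
      simp only [h, List.length_cons, Nat.add_right_cancel_iff] at hk
      obtain ⟨hsel, hque⟩ := ih hk
      simp [hsel, hque, List.drop_tail]

theorem fillSlots_subperm (k : ℕ) (ps q : List (MNode V)) :
    (fillSlots P eval k ps q).Subperm (q ++ ps.flatMap (children P)) := by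
  induction k generalizing ps q with
  | zero => exact List.nil_subperm
  | succ k ih =>
    rw [fillSlots_succ]
    have hperm : (enqueueNext P eval ps q ++ ps.tail.flatMap (children P)).Perm
        (q ++ ps.flatMap (children P)) := by
      cases ps with
      | nil => simp [enqueueNext]
      | cons p ps =>
        simp only [enqueueNext, List.tail_cons, List.flatMap_cons, ← List.append_assoc]
        exact ((insertAll_perm eval _ q).trans List.perm_append_comm).append_right _
    cases h : enqueueNext P eval ps q with
    | nil => exact List.nil_subperm
    | cons best rest =>
      rw [h] at hperm
      exact ((List.subperm_cons best).mpr (ih ps.tail rest)).trans hperm.subperm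

end FillSlots

theorem path_of_mem_children {P : SearchProblem V} {p n : MNode V} (h : n ∈ children P p) :
    n.path = p.path ++ [n.state] := by
  obtain ⟨c, -, rfl⟩ := List.mem_map.mp h
  rfl

theorem nodup_map_path_flatMap_children (P : SearchProblem V) {l : List (MNode V)}
    (hl : (l.map MNode.path).Nodup) :
    ((l.flatMap (children P)).map MNode.path).Nodup := by
  rw [List.map_flatMap, List.nodup_flatMap]
  constructor
  · intro p _
    rw [children, List.map_map]
    refine (Finset.nodup_toList _).map fun c c' h => ?_
    simpa using h
  · refine (List.pairwise_map.mp hl).imp fun {p p'} hne π hπ hπ' => hne ?_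
    obtain ⟨n, hn, rfl⟩ := List.mem_map.mp hπ
    obtain ⟨n', hn', hnn'⟩ := List.mem_map.mp hπ'
    rw [path_of_mem_children hn', path_of_mem_children hn] at hnn'
    exact (List.append_inj_left' hnn' rfl).symm

section Monobead

variable (P : SearchProblem V) (eval : V → ℚ) (s : ℕ)

theorem mem_children_of_mem_mbBeam_succ {ℓ : ℕ} {n : MNode V}
    (hn : n ∈ mbBeam P eval s (ℓ + 1)) : ∃ p ∈ mbBeam P eval s ℓ, n ∈ children P p := by
  simpa using (fillSlots_subperm P eval s (mbBeam P eval s ℓ) []).subset hn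

theorem length_path_of_mem_mbBeam {ℓ : ℕ} {n : MNode V} (hn : n ∈ mbBeam P eval s ℓ) :
    n.path.length = ℓ + 1 := by
  induction ℓ generalizing n with
  | zero =>
    obtain rfl := List.mem_singleton.mp hn
    rfl
  | succ ℓ ih =>
    obtain ⟨p, hp, hnp⟩ := mem_children_of_mem_mbBeam_succ P eval s hn
    simp [path_of_mem_children hnp, ih hp]

theorem nodup_map_path_mbBeam (ℓ : ℕ) : ((mbBeam P eval s ℓ).map MNode.path).Nodup := by
  induction ℓ with
  | zero => exact List.nodup_singleton _
  | succ ℓ ih =>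
    obtain ⟨l, hperm, hsub⟩ := fillSlots_subperm P eval s (mbBeam P eval s ℓ) []
    refine (hperm.map _).nodup_iff.mp ((nodup_map_path_flatMap_children P ih).sublist ?_)
    simpa using hsub.map MNode.path

theorem length_path_le_of_mem_mbLog {d : ℕ} {n : MNode V} (hn : n ∈ mbLog P eval s d) :
    n.path.length ≤ d + 1 := by
  induction d with
  | zero => exact (length_path_of_mem_mbBeam P eval s hn).le
  | succ d ih =>
    rcases List.mem_append.mp hn with hn | hn
    · exact (ih hn).trans (Nat.le_succ _)
    · exact (length_path_of_mem_mbBeam P eval s hn).le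

theorem nodup_mbLog (d : ℕ) : (mbLog P eval s d).Nodup := by
  suffices ((mbLog P eval s d).map MNode.path).Nodup from this.of_map _
  induction d with
  | zero => exact nodup_map_path_mbBeam P eval s 0
  | succ d ih =>
    rw [mbLog, List.map_append, List.nodup_append]
    refine ⟨ih, nodup_map_path_mbBeam P eval s _, ?_⟩
    simp only [List.mem_map]
    rintro _ ⟨n, hn, rfl⟩ _ ⟨m, hm, rfl⟩ h
    have := length_path_le_of_mem_mbLog P eval s hn
    rw [h, length_path_of_mem_mbBeam P eval s hm] at this
    omega

theorem coe_mbLog (d : ℕ) :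
    (mbLog P eval s d : Multiset (MNode V)) =
      ∑ ℓ ∈ Finset.range (d + 1), (mbBeam P eval s ℓ : Multiset (MNode V)) := by
  induction d with
  | zero => rfl
  | succ d ih => rw [Finset.sum_range_succ, ← ih, mbLog, Multiset.coe_add]

def BeamsFull : Prop :=
  ∀ ℓ, 1 ≤ ℓ → ℓ ≤ s → (mbBeam P eval s ℓ).length = s

variable {P eval s}

theorem mbLog_getLast? (hfull : BeamsFull P eval s) (hs : 1 ≤ s) :
    (mbLog P eval s s).getLast? = (mbBeam P eval s s)[s - 1]? := by
  obtain ⟨d, rfl⟩ : ∃ d, s = d + 1 := ⟨s - 1, by omega⟩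
  rw [mbLog, List.getLast?_append_of_ne_nil, List.getLast?_eq_getElem?, hfull _ hs le_rfl]
  rw [← List.length_pos_iff, hfull _ hs le_rfl]
  omega

end Monobead

section Levels

variable (P : SearchProblem V) (eval : V → ℚ) (s : ℕ)

/-- The queue of depth level `ℓ` of monobead once `p` of its slots have been filled. -/
noncomputable def levelResidual (ℓ p : ℕ) : List (MNode V) :=
  fillQueue P eval p (mbBeam P eval s (ℓ - 1)) []

/-- The queue of depth level `ℓ` once `p` of its slots have been filled and `a ≤ p + 1` nodes of
depth `ℓ - 1` have been expanded: the children of parent `p` are waiting in it exactly when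
`p < a`. -/
noncomputable def levelQueue (ℓ a p : ℕ) : List (MNode V) :=
  if p < a then enqueueNext P eval ((mbBeam P eval s (ℓ - 1)).drop p) (levelResidual P eval s ℓ p)
  else levelResidual P eval s ℓ p

variable {P eval s}

theorem mbBeam_take {ℓ p : ℕ} (hℓ : 1 ≤ ℓ) (hp : p ≤ s) :
    (mbBeam P eval s ℓ).take p = fillSlots P eval p (mbBeam P eval s (ℓ - 1)) [] := by
  obtain ⟨ℓ, rfl⟩ : ∃ ℓ', ℓ = ℓ' + 1 := ⟨ℓ - 1, by omega⟩
  exact (fillSlots_eq_take P eval hp _ _).symm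

theorem enqueueNext_levelResidual (hfull : BeamsFull P eval s) {ℓ p : ℕ} (hℓ : 1 ≤ ℓ)
    (hℓs : ℓ ≤ s) (hp : p < s) :
    ∃ b, (mbBeam P eval s ℓ)[p]? = some b ∧
      enqueueNext P eval ((mbBeam P eval s (ℓ - 1)).drop p) (levelResidual P eval s ℓ p) =
        b :: levelResidual P eval s ℓ (p + 1) := by
  have hlen : p < (mbBeam P eval s ℓ).length := by rw [hfull ℓ hℓ hℓs]; exact hp
  refine ⟨_, List.getElem?_eq_getElem hlen, ?_⟩
  have hk : (fillSlots P eval p (mbBeam P eval s (ℓ - 1)) []).length = p := by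
    rw [← mbBeam_take hℓ hp.le, List.length_take]
    omega
  obtain ⟨hsel, hque⟩ := fillSlots_succ_of_length P eval hk
  rw [← mbBeam_take hℓ hp, ← mbBeam_take hℓ hp.le, List.take_add_one,
    List.getElem?_eq_getElem hlen, Option.toList_some] at hsel
  unfold levelResidual
  set E := enqueueNext P eval ((mbBeam P eval s (ℓ - 1)).drop p)
    (fillQueue P eval p (mbBeam P eval s (ℓ - 1)) [])
  calc E = E.take 1 ++ E.drop 1 := (List.take_append_drop 1 E).symm
    _ = _ := by rw [← List.append_cancel_left hsel, hque]; rfl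

end Levels

section Steps

variable {P : SearchProblem V} {eval : V → ℚ} {ℓ : ℕ} {σ : SRState V}

@[simp] theorem srSelect_log : (srSelect ℓ σ).log = σ.log := by
  unfold srSelect; split <;> rfl

@[simp] theorem srSelect_iter : (srSelect ℓ σ).iter = σ.iter := by
  unfold srSelect; split <;> rfl

@[simp] theorem srSelect_expCnt : (srSelect ℓ σ).expCnt = σ.expCnt := by
  unfold srSelect; split <;> rfl

theorem srSelect_of_queue_eq_cons {b : MNode V} {q : List (MNode V)} (hq : σ.queue ℓ = b :: q) :
    srSelect ℓ σ =
      { σ with sel := fun m => if m = ℓ then σ.sel m ++ [b] else σ.sel m,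
               queue := fun m => if m = ℓ then q else σ.queue m } := by
  simp [srSelect, hq]

theorem srExpandNext_of_drop_eq_cons {n : MNode V} {rest : List (MNode V)}
    (h : (σ.sel ℓ).drop (σ.expCnt ℓ) = n :: rest) :
    srExpandNext P eval ℓ σ =
      { σ with
        expCnt := fun m => if m = ℓ then σ.expCnt m + 1 else σ.expCnt m,
        queue := fun m =>
          if m = ℓ + 1 then insertAll eval (children P n) (σ.queue m) else σ.queue m,
        log := σ.log ++ [n] } := by
  simp [srExpandNext, h]

theorem srExpandNext_eq_srExpandNext_srSelect (he : σ.expCnt ℓ = (σ.sel ℓ).length) :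
    srExpandNext P eval ℓ σ = srExpandNext P eval ℓ (srSelect ℓ σ) := by
  cases hq : σ.queue ℓ <;> simp [srExpandNext, srSelect, hq, he]

end Steps

section Simulation

variable (P : SearchProblem V) (eval : V → ℚ) (s : ℕ)

/-- On the depth levels `1, …, s`, the state `σ` of strict rectangle search has selected a prefix
of monobead's beam, and holds the queue monobead holds at the same point. -/
structure Simulates (σ : SRState V) : Prop where
  expCnt_zero : σ.expCnt 0 = 1
  sel_prefix : ∀ ℓ ∈ Set.Icc 1 s, σ.sel ℓ <+: mbBeam P eval s ℓ
  expCnt_le : ∀ ℓ ∈ Set.Icc 1 s, σ.expCnt ℓ ≤ (σ.sel ℓ).length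
  expCnt_pred_le : ∀ ℓ ∈ Set.Icc 1 s, σ.expCnt (ℓ - 1) ≤ (σ.sel ℓ).length + 1
  queue_eq : ∀ ℓ ∈ Set.Icc 1 s,
    σ.queue ℓ = levelQueue P eval s ℓ (σ.expCnt (ℓ - 1)) (σ.sel ℓ).length
  log_eq : (σ.log : Multiset (MNode V)) =
    ∑ ℓ ∈ Finset.range (s + 1), ((mbBeam P eval s ℓ).take (σ.expCnt ℓ) : Multiset (MNode V))

def HasCounters (σ : SRState V) (E N : ℕ → ℕ) : Prop :=
  Set.EqOn σ.expCnt E (Set.Icc 1 s) ∧ Set.EqOn (fun ℓ => (σ.sel ℓ).length) N (Set.Icc 1 s)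

variable {P eval s} {σ : SRState V} {E N : ℕ → ℕ} {ℓ : ℕ}

theorem HasCounters.congr {E' N' : ℕ → ℕ} (h : HasCounters s σ E N)
    (hE : ∀ ℓ, 1 ≤ ℓ → ℓ ≤ s → E ℓ = E' ℓ) (hN : ∀ ℓ, 1 ≤ ℓ → ℓ ≤ s → N ℓ = N' ℓ) :
    HasCounters s σ E' N' :=
  ⟨fun ℓ hℓ => (h.1 hℓ).trans (hE ℓ hℓ.1 hℓ.2), fun ℓ hℓ => (h.2 hℓ).trans (hN ℓ hℓ.1 hℓ.2)⟩

theorem Simulates.sel_eq_take (h : Simulates P eval s σ) (hℓ : ℓ ∈ Set.Icc 1 s) :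
    σ.sel ℓ = (mbBeam P eval s ℓ).take (σ.sel ℓ).length :=
  List.prefix_iff_eq_take.mp (h.sel_prefix ℓ hℓ)

/-- Level `1` has a single parent, the start node, whose children were all enqueued at once. -/
theorem Simulates.queue_eq_cons (hfull : BeamsFull P eval s) (h : Simulates P eval s σ)
    (hℓ : ℓ ∈ Set.Icc 1 s) (hlt : (σ.sel ℓ).length < s)
    (hready : (σ.sel ℓ).length < σ.expCnt (ℓ - 1) ∨ ℓ = 1) :
    ∃ b, (mbBeam P eval s ℓ)[(σ.sel ℓ).length]? = some b ∧
      σ.queue ℓ = b :: levelResidual P eval s ℓ ((σ.sel ℓ).length + 1) := by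
  obtain ⟨b, hb, hnext⟩ := enqueueNext_levelResidual hfull hℓ.1 hℓ.2 hlt
  refine ⟨b, hb, ?_⟩
  rw [h.queue_eq ℓ hℓ, levelQueue]
  split_ifs with hpos
  · exact hnext
  · obtain rfl : ℓ = 1 := hready.resolve_left hpos
    rw [Nat.sub_self, h.expCnt_zero, not_lt] at hpos
    have hdrop : (mbBeam P eval s 0).drop (σ.sel 1).length = [] := List.drop_eq_nil_of_le hpos
    rwa [Nat.sub_self, hdrop, enqueueNext] at hnext

theorem Simulates.srSelect_of_notMem (h : Simulates P eval s σ) (hc : HasCounters s σ E N)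
    (hℓ : ℓ ∉ Set.Icc 1 s) :
    Simulates P eval s (srSelect ℓ σ) ∧ HasCounters s (srSelect ℓ σ) E N := by
  have hne : ∀ m ∈ Set.Icc 1 s, m ≠ ℓ := by rintro m hm rfl; exact hℓ hm
  have hsel : ∀ m ∈ Set.Icc 1 s, (srSelect ℓ σ).sel m = σ.sel m := fun m hm => by
    unfold srSelect; split <;> simp [hne m hm]
  have hqueue : ∀ m ∈ Set.Icc 1 s, (srSelect ℓ σ).queue m = σ.queue m := fun m hm => by
    unfold srSelect; split <;> simp [hne m hm]
  refine ⟨⟨?_, fun m hm => ?_, fun m hm => ?_, fun m hm => ?_, fun m hm => ?_, ?_⟩,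
    ⟨fun m hm => ?_, fun m hm => ?_⟩⟩
  · simpa using h.expCnt_zero
  · simpa [hsel m hm] using h.sel_prefix m hm
  · simpa [hsel m hm] using h.expCnt_le m hm
  · simpa [hsel m hm] using h.expCnt_pred_le m hm
  · simpa [hsel m hm, hqueue m hm] using h.queue_eq m hm
  · simpa using h.log_eq
  · simpa using hc.1 hm
  · simpa [hsel m hm] using hc.2 hm

theorem Simulates.srSelect_of_mem (hfull : BeamsFull P eval s) (h : Simulates P eval s σ)
    (hc : HasCounters s σ E N) (hℓ : ℓ ∈ Set.Icc 1 s)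
    (hready : N ℓ < s ∧ (N ℓ < E (ℓ - 1) ∨ ℓ = 1)) :
    Simulates P eval s (srSelect ℓ σ) ∧
      HasCounters s (srSelect ℓ σ) E (fun m => if m = ℓ then N m + 1 else N m) := by
  have hN : (σ.sel ℓ).length = N ℓ := hc.2 hℓ
  have hready' : (σ.sel ℓ).length < σ.expCnt (ℓ - 1) ∨ ℓ = 1 := by
    rcases Nat.lt_or_ge 1 ℓ with h1 | h1
    · have hE : σ.expCnt (ℓ - 1) = E (ℓ - 1) :=
        hc.1 (show ℓ - 1 ∈ Set.Icc 1 s from ⟨by omega, by have := hℓ.2; omega⟩)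
      rw [hN, hE]
      exact hready.2
    · exact Or.inr (by have := hℓ.1; omega)
  obtain ⟨b, hb, hq⟩ := h.queue_eq_cons hfull hℓ (hN ▸ hready.1) hready'
  rw [srSelect_of_queue_eq_cons hq]
  have hpred := h.expCnt_pred_le ℓ hℓ
  refine ⟨⟨h.expCnt_zero, fun m hm => ?_, fun m hm => ?_, fun m hm => ?_, fun m hm => ?_,
    h.log_eq⟩, ⟨hc.1, fun m hm => ?_⟩⟩ <;> obtain rfl | hne := eq_or_ne m ℓ
  · simp only [if_pos]
    rw [h.sel_eq_take hm, ← Option.toList_some, ← hb, ← List.take_add_one]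
    exact List.take_prefix _ _
  · simpa [hne] using h.sel_prefix m hm
  · simpa using (h.expCnt_le m hm).trans (Nat.le_succ _)
  · simpa [hne] using h.expCnt_le m hm
  · simpa using hpred.trans (Nat.le_succ _)
  · simpa [hne] using h.expCnt_pred_le m hm
  · simp [levelQueue, hpred]
  · simpa [hne] using h.queue_eq m hm
  · simp [hN]
  · simpa [hne] using hc.2 hm

theorem Simulates.srSelect (hfull : BeamsFull P eval s) (h : Simulates P eval s σ)
    (hc : HasCounters s σ E N) (hready : ℓ ∈ Set.Icc 1 s → N ℓ < s ∧ (N ℓ < E (ℓ - 1) ∨ ℓ = 1)) :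
    Simulates P eval s (srSelect ℓ σ) ∧
      HasCounters s (srSelect ℓ σ) E (fun m => if m = ℓ then N m + 1 else N m) := by
  by_cases hℓ : ℓ ∈ Set.Icc 1 s
  · exact h.srSelect_of_mem hfull hc hℓ (hready hℓ)
  · obtain ⟨h', hc'⟩ := h.srSelect_of_notMem hc hℓ
    refine ⟨h', hc'.congr (fun _ _ _ => rfl) fun m hm1 hm2 => ?_⟩
    simp [show m ≠ ℓ by rintro rfl; exact hℓ ⟨hm1, hm2⟩]

theorem Simulates.srExpandNext_of_lt (h : Simulates P eval s σ) (hc : HasCounters s σ E N)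
    (hℓ : ℓ ∈ Set.Icc 1 s) (hlt : E ℓ < N ℓ) (hnext : ℓ < s → E ℓ = N (ℓ + 1)) :
    Simulates P eval s (srExpandNext P eval ℓ σ) ∧
      HasCounters s (srExpandNext P eval ℓ σ) (fun m => if m = ℓ then E m + 1 else E m) N ∧
      (srExpandNext P eval ℓ σ).iter = σ.iter ∧
      (srExpandNext P eval ℓ σ).log.getLast? = (mbBeam P eval s ℓ)[E ℓ]? := by
  have hE : σ.expCnt ℓ = E ℓ := hc.1 hℓ
  have hN : (σ.sel ℓ).length = N ℓ := hc.2 hℓ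
  have hlen : σ.expCnt ℓ < (σ.sel ℓ).length := by omega
  have hn : (mbBeam P eval s ℓ)[σ.expCnt ℓ]? = some (σ.sel ℓ)[σ.expCnt ℓ] := by
    rw [(h.sel_prefix ℓ hℓ).getElem hlen]
    exact List.getElem?_eq_getElem _
  rw [srExpandNext_of_drop_eq_cons (List.drop_eq_getElem_cons hlen), ← hE]
  refine ⟨⟨?_, h.sel_prefix, fun m hm => ?_, fun m hm => ?_, fun m hm => ?_, ?_⟩,
    ⟨fun m hm => ?_, hc.2⟩, rfl, by simp [hn]⟩
  · simpa [show 0 ≠ ℓ by have := hℓ.1; omega] using h.expCnt_zero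
  · obtain rfl | hne := eq_or_ne m ℓ
    · simpa using hlen
    · simpa [hne] using h.expCnt_le m hm
  · obtain hℓm | hne := eq_or_ne (m - 1) ℓ
    · obtain rfl : m = ℓ + 1 := by have := hm.1; omega
      have hp : (σ.sel (ℓ + 1)).length = σ.expCnt ℓ := by
        rw [hE, hnext (by have := hm.2; omega)]; exact hc.2 hm
      simp [hp]
    · simpa [hne] using h.expCnt_pred_le m hm
  · obtain rfl | hne := eq_or_ne m (ℓ + 1)
    · have hp : (σ.sel (ℓ + 1)).length = σ.expCnt ℓ := by
        rw [hE, hnext (by have := hm.2; omega)]; exact hc.2 hm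
      obtain ⟨hlt', hget⟩ := List.getElem?_eq_some_iff.mp hn
      simp only [Nat.add_sub_cancel, if_true, h.queue_eq (ℓ + 1) hm, hp, levelQueue, lt_irrefl,
        if_false, Nat.lt_succ_self, List.drop_eq_getElem_cons hlt', hget]
      rfl
    · have hne' : m - 1 ≠ ℓ := by have := hm.1; omega
      simpa [hne, hne'] using h.queue_eq m hm
  · have hmem : ℓ ∈ Finset.range (s + 1) := Finset.mem_range.mpr (by have := hℓ.2; omega)
    dsimp only
    rw [sum_coe_take_update _ _ _ hmem hn, ← h.log_eq, ← Multiset.coe_singleton,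
      Multiset.coe_add]
  · obtain rfl | hne := eq_or_ne m ℓ
    · simp [hE]
    · simpa [hne] using hc.1 hm

theorem Simulates.srExpandNext (hfull : BeamsFull P eval s) (h : Simulates P eval s σ)
    (hc : HasCounters s σ E N) (hℓ : ℓ ∈ Set.Icc 1 s) (hnext : ℓ < s → E ℓ = N (ℓ + 1))
    (hready : E ℓ = N ℓ → N ℓ < s ∧ (N ℓ < E (ℓ - 1) ∨ ℓ = 1)) :
    Simulates P eval s (srExpandNext P eval ℓ σ) ∧
      HasCounters s (srExpandNext P eval ℓ σ) (fun m => if m = ℓ then E m + 1 else E m)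
        (fun m => if m = ℓ then max (N m) (E m + 1) else N m) ∧
      (srExpandNext P eval ℓ σ).iter = σ.iter ∧
      (srExpandNext P eval ℓ σ).log.getLast? = (mbBeam P eval s ℓ)[E ℓ]? := by
  have hE : σ.expCnt ℓ = E ℓ := hc.1 hℓ
  have hN : (σ.sel ℓ).length = N ℓ := hc.2 hℓ
  have hle : E ℓ ≤ N ℓ := hE ▸ hN ▸ h.expCnt_le ℓ hℓ
  rcases hle.lt_or_eq with hlt | heq
  · obtain ⟨h', hc', hiter, hlog⟩ := h.srExpandNext_of_lt hc hℓ hlt hnext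
    refine ⟨h', hc'.congr (fun _ _ _ => rfl) fun m _ _ => ?_, hiter, hlog⟩
    split_ifs with hm
    · subst hm; omega
    · rfl
  · obtain ⟨h₁, hc₁⟩ := h.srSelect_of_mem hfull hc hℓ (hready heq)
    rw [srExpandNext_eq_srExpandNext_srSelect (by omega)]
    obtain ⟨h', hc', hiter, hlog⟩ := h₁.srExpandNext_of_lt hc₁ hℓ (by simp; omega)
      (by simpa using hnext)
    refine ⟨h', hc'.congr (fun _ _ _ => rfl) fun m _ _ => ?_, by simpa using hiter, hlog⟩
    split_ifs with hm
    · subst hm; omega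
    · rfl

theorem Simulates.log_perm_mbLog (hfull : BeamsFull P eval s) (h : Simulates P eval s σ)
    (he : ∀ ℓ ∈ Set.Icc 1 s, σ.expCnt ℓ = s) : σ.log.Perm (mbLog P eval s s) := by
  rw [← Multiset.coe_eq_coe, h.log_eq, coe_mbLog]
  refine Finset.sum_congr rfl fun ℓ hℓ => ?_
  rw [List.take_of_length_le]
  rcases Nat.eq_zero_or_pos ℓ with rfl | hℓ0
  · simp [h.expCnt_zero, mbBeam]
  · have hℓ' : ℓ ∈ Set.Icc 1 s := ⟨hℓ0, Nat.lt_succ_iff.mp (Finset.mem_range.mp hℓ)⟩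
    rw [hfull ℓ hℓ'.1 hℓ'.2, he ℓ hℓ']

end Simulation

section Run

variable (P : SearchProblem V) (eval : V → ℚ) (s : ℕ)

theorem srInit_spec :
    Simulates P eval s (srInit P eval) ∧ HasCounters s (srInit P eval) 0 0 ∧
      (srInit P eval).iter = 0 := by
  rw [srInit, srExpandNext_of_drop_eq_cons (n := ⟨P.start, 0, [P.start]⟩) (rest := []) rfl]
  refine ⟨⟨rfl, fun ℓ hℓ => ?_, fun ℓ hℓ => ?_, fun ℓ hℓ => ?_, fun ℓ hℓ => ?_, ?_⟩,
    ⟨fun ℓ hℓ => ?_, fun ℓ hℓ => ?_⟩, rfl⟩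
  · simp [show ℓ ≠ 0 by have := hℓ.1; omega]
  · simp [show ℓ ≠ 0 by have := hℓ.1; omega]
  · dsimp only
    split_ifs <;> simp
  · obtain rfl | hℓ1 := eq_or_ne ℓ 1
    · rfl
    · have hℓ0 : ℓ ≠ 0 := by have := hℓ.1; omega
      have hℓ2 : ℓ - 1 ≠ 0 := by omega
      simp [hℓ0, hℓ1, hℓ2, levelQueue, levelResidual, fillQueue]
  · rw [Finset.sum_eq_single 0] <;> simp +contextual [mbBeam]
  · simp [show ℓ ≠ 0 by have := hℓ.1; omega]
  · simp [show ℓ ≠ 0 by have := hℓ.1; omega]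

variable {P eval s}

theorem shallowPhase_spec (hfull : BeamsFull P eval s) {k : ℕ} (hk : k < s) {σ : SRState V}
    (hiter : σ.iter = k) (h : Simulates P eval s σ)
    (hc : HasCounters s σ (fun ℓ => if ℓ ≤ k then k else 0) (fun ℓ => if ℓ ≤ k + 1 then k else 0)) :
    let τ := (List.range k).foldl (fun σ' i => srExpandNext P eval (i + 1) σ') σ
    τ.iter = k ∧ Simulates P eval s τ ∧
      HasCounters s τ (fun ℓ => if ℓ ≤ k then k + 1 else 0)
        (fun ℓ => if ℓ ≤ k then k + 1 else if ℓ = k + 1 then k else 0) := by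
  have := foldl_range_induction (fun σ' i => srExpandNext P eval (i + 1) σ')
    (fun j τ => τ.iter = k ∧ Simulates P eval s τ ∧
      HasCounters s τ (fun ℓ => if ℓ ≤ j then k + 1 else if ℓ ≤ k then k else 0)
        (fun ℓ => if ℓ ≤ j then k + 1 else if ℓ ≤ k + 1 then k else 0))
    (n := k) ⟨hiter, h, hc.congr (fun ℓ _ _ => by split_ifs <;> omega)
      (fun ℓ _ _ => by split_ifs <;> omega)⟩ fun j hj τ ⟨hiter, hτ, hcτ⟩ => by
    obtain ⟨h', hc', hiter', -⟩ := hτ.srExpandNext hfull hcτ (ℓ := j + 1) ⟨by omega, by omega⟩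
      (fun _ => by split_ifs <;> omega) (fun _ => by split_ifs <;> omega)
    exact ⟨hiter'.trans hiter, h', hc'.congr (fun ℓ _ _ => by split_ifs <;> omega)
      (fun ℓ _ _ => by split_ifs <;> omega)⟩
  exact ⟨this.1, this.2.1, this.2.2.congr (fun ℓ _ _ => by split_ifs <;> omega)
    (fun ℓ _ _ => by split_ifs <;> omega)⟩

theorem deepPhase_spec (hfull : BeamsFull P eval s) {k : ℕ} (hk : k < s) {σ : SRState V}
    (hiter : σ.iter = k) (h : Simulates P eval s σ)
    (hc : HasCounters s σ (fun ℓ => if ℓ ≤ k then k + 1 else 0)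
      (fun ℓ => if ℓ ≤ k then k + 1 else if ℓ = k + 1 then k else 0)) :
    let τ := (List.range (k + 1)).foldl
      (fun σ' _ => srSelect (k + 2) (srExpandNext P eval (k + 1) σ')) σ
    τ.iter = k ∧ Simulates P eval s τ ∧
      HasCounters s τ (fun ℓ => if ℓ ≤ k + 1 then k + 1 else 0)
        (fun ℓ => if ℓ ≤ k + 2 then k + 1 else 0) ∧
      τ.log.getLast? = (mbBeam P eval s (k + 1))[k]? := by
  have := foldl_range_induction (fun σ' _ => srSelect (k + 2) (srExpandNext P eval (k + 1) σ'))
    (fun j τ => τ.iter = k ∧ Simulates P eval s τ ∧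
      HasCounters s τ (fun ℓ => if ℓ ≤ k then k + 1 else if ℓ = k + 1 then j else 0)
        (fun ℓ => if ℓ ≤ k then k + 1 else if ℓ = k + 1 then max k j
          else if ℓ = k + 2 then j else 0) ∧
      (0 < j → τ.log.getLast? = (mbBeam P eval s (k + 1))[j - 1]?))
    (n := k + 1) ⟨hiter, h, hc.congr (fun ℓ _ _ => by split_ifs <;> omega)
      (fun ℓ _ _ => by split_ifs <;> omega), by omega⟩ fun j hj τ ⟨hiter, hτ, hcτ, _⟩ => by
    obtain ⟨h', hc', hiter', hlog⟩ := hτ.srExpandNext hfull hcτ (ℓ := k + 1) ⟨by omega, by omega⟩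
      (fun _ => by split_ifs <;> omega) (fun _ => by split_ifs <;> omega)
    obtain ⟨h'', hc''⟩ := h'.srSelect hfull hc' (ℓ := k + 2)
      (fun _ => by split_ifs <;> omega)
    refine ⟨by simpa [hiter'] using hiter, h'', hc''.congr (fun ℓ _ _ => by split_ifs <;> omega)
      (fun ℓ _ _ => by split_ifs <;> omega), fun _ => ?_⟩
    simpa using hlog
  exact ⟨this.1, this.2.1, this.2.2.1.congr (fun ℓ _ _ => by split_ifs <;> omega)
    (fun ℓ _ _ => by split_ifs <;> omega), by simpa using this.2.2.2 (by omega)⟩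

theorem srIter_spec (hfull : BeamsFull P eval s) {k : ℕ} (hk : k < s) {σ : SRState V}
    (hiter : σ.iter = k) (h : Simulates P eval s σ)
    (hc : HasCounters s σ (fun ℓ => if ℓ ≤ k then k else 0) (fun ℓ => if ℓ ≤ k + 1 then k else 0)) :
    (srIter P eval σ).iter = k + 1 ∧ Simulates P eval s (srIter P eval σ) ∧
      HasCounters s (srIter P eval σ) (fun ℓ => if ℓ ≤ k + 1 then k + 1 else 0)
        (fun ℓ => if ℓ ≤ k + 2 then k + 1 else 0) ∧
      (srIter P eval σ).log.getLast? = (mbBeam P eval s (k + 1))[k]? := by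
  obtain ⟨hiter₁, h₁, hc₁⟩ := shallowPhase_spec hfull hk hiter h hc
  obtain ⟨-, h₂, hc₂, hlog⟩ := deepPhase_spec hfull hk hiter₁ h₁ hc₁
  simp only [srIter, hiter, Nat.add_sub_cancel, true_and]
  exact ⟨⟨h₂.1, h₂.2, h₂.3, h₂.4, h₂.5, h₂.6⟩, hc₂, hlog⟩

theorem srRun_spec (hfull : BeamsFull P eval s) {k : ℕ} (hk : k ≤ s) :
    (srRun P eval k).iter = k ∧ Simulates P eval s (srRun P eval k) ∧
      HasCounters s (srRun P eval k) (fun ℓ => if ℓ ≤ k then k else 0)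
        (fun ℓ => if ℓ ≤ k + 1 then k else 0) ∧
      (0 < k → (srRun P eval k).log.getLast? = (mbBeam P eval s k)[k - 1]?) := by
  induction k with
  | zero =>
    obtain ⟨h, hc, hiter⟩ := srInit_spec P eval s
    exact ⟨hiter, h, hc.congr (fun _ _ _ => by simp) (fun _ _ _ => by simp), by simp⟩
  | succ k ih =>
    obtain ⟨hiter, h, hc, -⟩ := ih (by omega)
    rw [srRun, Function.iterate_succ_apply', ← srRun]
    obtain ⟨hiter', h', hc', hlog⟩ := srIter_spec hfull (by omega) hiter h hc
    exact ⟨hiter', h', hc', fun _ => hlog⟩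

end Run

theorem countUpTo_eq_length [DecidableEq V] {l : List (MNode V)} {x : MNode V} (hl : l.Nodup)
    (hx : l.getLast? = some x) : countUpTo l x = l.length := by
  conv_rhs => rw [← takeWhile_bne_append_of_getLast? hl hx]
  simp [countUpTo]

theorem strict_rectangle_overhead_eq_zero_general
    (V : Type) [DecidableEq V]
    (P : SearchProblem V) (eval : V → ℚ)
    (s d : ℕ) (hs : 1 ≤ s) (x : MNode V)
    -- monobead with beam width `s` expands `x` in slot `s` at depth `d` ...
    (hx : (mbBeam P eval s d)[s - 1]? = some x)
    -- monobead never runs out of nodes to fill its beam ...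
    (hmbFull : ∀ j, 1 ≤ j → j ≤ d → (mbBeam P eval s j).length = s)
    (hcase : s = d) :
    x ∈ (srRun P eval (max s d)).log ∧
    ((srRun P eval (max s d)).log.takeWhile (fun m => m != x) ++ [x]).toFinset =
      ((mbLog P eval s d).takeWhile (fun m => m != x) ++ [x]).toFinset ∧
    countUpTo (srRun P eval (max s d)).log x = countUpTo (mbLog P eval s d) x := by
  subst hcase
  rw [max_self]
  obtain ⟨-, h, hc, hlast⟩ := srRun_spec hmbFull le_rfl
  have hperm := h.log_perm_mbLog hmbFull fun ℓ hℓ => by simpa [hℓ.2] using hc.1 hℓ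
  have hmb_nodup := nodup_mbLog P eval s s
  have hsr_nodup := hperm.nodup_iff.mpr hmb_nodup
  have hmb : (mbLog P eval s s).getLast? = some x := by rw [mbLog_getLast? hmbFull hs, hx]
  have hsr : (srRun P eval s).log.getLast? = some x := by rw [hlast hs, hx]
  rw [takeWhile_bne_append_of_getLast? hsr_nodup hsr,
    takeWhile_bne_append_of_getLast? hmb_nodup hmb, countUpTo_eq_length hsr_nodup hsr,
    countUpTo_eq_length hmb_nodup hmb]
  exact ⟨List.mem_of_getLast? hsr, List.toFinset_eq_of_perm _ _ hperm, hperm.length_eq⟩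

/-- When `s = d`, strict rectangle search searches exactly
the same region as monobead: suppose monobead with beam width `s` generates
its first solution when expanding a node `x` at slot `s` of depth `d`, that
no other solutions exist, that strict rectangle search never runs out of
nodes to fill its beam, and that tie-breaking is identical (both models use
the same deterministic queue insertion).  If `s = d`, then strict rectangle
search expands `x`, it expands exactly the same set of nodes as monobead up
to the expansion of `x`, and in particular the numbers of nodes expanded by
the two algorithms up to the expansion of `x` are equal (the overhead is
0). -/
theorem strict_rectangle_overhead_eq_zero
    (V : Type) [DecidableEq V]
    (P : SearchProblem V) (eval : V → ℚ)
    (s d : ℕ) (hs : 1 ≤ s) (hd : 1 ≤ d) (x : MNode V)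
    -- monobead with beam width `s` expands `x` in slot `s` at depth `d` ...
    (hx : (mbBeam P eval s d)[s - 1]? = some x)
    -- ... and that expansion generates a solution (a goal child of `x`) ...
    (hsol : ∃ c ∈ P.succ x.state, P.isGoal c = true)
    -- ... which is monobead's first solution: no node expanded before `x`
    -- generates a goal ...
    (hfirst : ∀ n ∈ (mbLog P eval s d).takeWhile (fun m => m != x),
        ∀ c ∈ P.succ n.state, P.isGoal c = false)
    -- ... and no other solutions exist: every solution path is obtained by
    -- extending `x`'s path with a goal child of `x`
    (honly : ∀ p, IsSolutionPath P p →
        ∃ c ∈ P.succ x.state, P.isGoal c = true ∧ p = x.path ++ [c])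
    -- monobead never runs out of nodes to fill its beam ...
    (hmbFull : ∀ j, 1 ≤ j → j ≤ d → (mbBeam P eval s j).length = s)
    -- ... and neither does strict rectangle search
    (hsrOK : (srRun P eval (max s d)).starved = false)
    (hcase : s = d) :
    x ∈ (srRun P eval (max s d)).log ∧
    ((srRun P eval (max s d)).log.takeWhile (fun m => m != x) ++ [x]).toFinset =
      ((mbLog P eval s d).takeWhile (fun m => m != x) ++ [x]).toFinset ∧
    countUpTo (srRun P eval (max s d)).log x = countUpTo (mbLog P eval s d) x :=
  strict_rectangle_overhead_eq_zero_general V P eval s d hs x hx hmbFull hcase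

end RectangleSearchFormal
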